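/- arXiv:1004.0214 — 4 statements merged into one kernel-verified Lean document; each statement's English description precedes it below -/
import Mathlib

section
/- If B₁ and B₂ are two closed round balls in the plane ℂ such that B₁ ∩ B₂ is nonempty but does not contain a diameter (a segment through the center of length equal to the diameter) of either B₁ or B₂, then B₁ ∩ B₂ is contained in a closed ball whose diameter is strictly less than the diameters of both B₁ and B₂. -/
/-!
If no diameter of `B₁` lies in `B₂`, in particular the one perpendicular to the line of
centres does not, and by Pythagoras `r₂² < |c₁ - c₂|² + r₁²`; symmetrically
`r₁² < |c₁ - c₂|² + r₂²`. For `p = (1 - t) c₁ + t c₂` with `t ∈ [0, 1]` and any `z`,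
`|z - p|² = (1 - t) |z - c₁|² + t |z - c₂|² - t (1 - t) |c₁ - c₂|²`, so `B₁ ∩ B₂` lies in the
ball about `p` of radius `√((1 - t) r₁² + t r₂² - t (1 - t) |c₁ - c₂|²)`. Choosing `p` on the
radical axis makes this radius `√(r₁² - t² |c₁ - c₂|²) = √(r₂² - (1 - t)² |c₁ - c₂|²)`, and the
two inequalities say exactly that `0 < t < 1`.
-/

open Metric AffineMap

section InnerProductSpace

variable {E : Type*} [NormedAddCommGroup E] [InnerProductSpace ℝ E]

theorem norm_sub_smul_add_smul_sq (u v : E) (t : ℝ) :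
    ‖(1 - t) • u + t • v‖ ^ 2 =
      (1 - t) * ‖u‖ ^ 2 + t * ‖v‖ ^ 2 - t * (1 - t) * ‖u - v‖ ^ 2 := by
  rw [norm_add_sq_real, norm_sub_sq_real, norm_smul, norm_smul, inner_smul_left,
    inner_smul_right, Real.norm_eq_abs, Real.norm_eq_abs, mul_pow, mul_pow, sq_abs, sq_abs,
    RCLike.conj_to_real]
  ring

theorem dist_lineMap_sq (x a b : E) (t : ℝ) :
    dist x (lineMap a b t) ^ 2 =
      (1 - t) * dist x a ^ 2 + t * dist x b ^ 2 - t * (1 - t) * dist a b ^ 2 := by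
  have hx : x - lineMap a b t = (1 - t) • (x - a) + t • (x - b) := by
    rw [lineMap_apply_module]; module
  have hab : a - b = (x - b) - (x - a) := by abel
  rw [dist_eq_norm, dist_eq_norm, dist_eq_norm, dist_eq_norm, hx, hab, norm_sub_rev (x - b),
    norm_sub_smul_add_smul_sq]

theorem closedBall_inter_closedBall_subset_closedBall_lineMap (a b : E) (r₁ r₂ : ℝ) {t : ℝ}
    (ht₀ : 0 ≤ t) (ht₁ : t ≤ 1) :
    closedBall a r₁ ∩ closedBall b r₂ ⊆
      closedBall (lineMap a b t)
        √((1 - t) * r₁ ^ 2 + t * r₂ ^ 2 - t * (1 - t) * dist a b ^ 2) := by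
  rintro x ⟨hxa, hxb⟩
  rw [mem_closedBall] at hxa hxb ⊢
  apply Real.le_sqrt_of_sq_le
  rw [dist_lineMap_sq]
  gcongr (1 - t) * ?_ + t * ?_ - _
  · exact pow_le_pow_left₀ dist_nonneg hxa 2
  · exact pow_le_pow_left₀ dist_nonneg hxb 2

theorem exists_closedBall_lt_of_sq_lt_dist_sq_add_sq {a b : E} {r₁ r₂ : ℝ} (hr₁ : 0 < r₁)
    (hr₂ : 0 < r₂) (h₁ : r₂ ^ 2 < dist a b ^ 2 + r₁ ^ 2) (h₂ : r₁ ^ 2 < dist a b ^ 2 + r₂ ^ 2) :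
    ∃ (c : E) (r : ℝ), r < r₁ ∧ r < r₂ ∧ closedBall a r₁ ∩ closedBall b r₂ ⊆ closedBall c r := by
  set D := dist a b ^ 2
  have hD : 0 < D := by linarith
  obtain ⟨t, ht⟩ : ∃ t : ℝ, 2 * D * t = D + r₁ ^ 2 - r₂ ^ 2 :=
    ⟨(D + r₁ ^ 2 - r₂ ^ 2) / (2 * D), by field_simp⟩
  have ht₀ : 0 < t := by nlinarith
  have ht₁ : t < 1 := by nlinarith
  have hrad₁ : (1 - t) * r₁ ^ 2 + t * r₂ ^ 2 - t * (1 - t) * D = r₁ ^ 2 - t ^ 2 * D := by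
    linear_combination t * ht
  have hrad₂ : (1 - t) * r₁ ^ 2 + t * r₂ ^ 2 - t * (1 - t) * D = r₂ ^ 2 - (1 - t) ^ 2 * D := by
    linear_combination (t - 1) * ht
  refine ⟨lineMap a b t, _, ?_, ?_,
    closedBall_inter_closedBall_subset_closedBall_lineMap a b r₁ r₂ ht₀.le ht₁.le⟩
  · rw [Real.sqrt_lt' hr₁, hrad₁]
    have : 0 < t ^ 2 * D := by positivity
    linarith
  · rw [Real.sqrt_lt' hr₂, hrad₂]
    have : 0 < (1 - t) ^ 2 * D := mul_pos (pow_pos (sub_pos.mpr ht₁) 2) hD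
    linarith

theorem segment_subset_closedBall_inter_closedBall {a b d : E} {r₁ r₂ : ℝ} (hr₂ : 0 ≤ r₂)
    (hd : ‖d‖ = r₁) (hperp : inner ℝ d (b - a) = 0) (h : dist a b ^ 2 + r₁ ^ 2 ≤ r₂ ^ 2) :
    segment ℝ (a - d) (a + d) ⊆ closedBall a r₁ ∩ closedBall b r₂ := by
  have hend : ∀ e : E, ‖e‖ = r₁ → inner ℝ e (b - a) = 0 →
      a + e ∈ closedBall a r₁ ∩ closedBall b r₂ := by
    intro e he hperp
    refine ⟨by rw [mem_closedBall, dist_eq_norm, add_sub_cancel_left, he], ?_⟩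
    rw [mem_closedBall, ← pow_le_pow_iff_left₀ dist_nonneg hr₂ two_ne_zero, dist_eq_norm,
      show a + e - b = e - (b - a) by abel, norm_sub_sq_real, hperp, he, ← dist_eq_norm']
    linarith
  rw [sub_eq_add_neg]
  exact ((convex_closedBall a r₁).inter (convex_closedBall b r₂)).segment_subset
    (hend (-d) (by rw [norm_neg, hd]) (by rw [inner_neg_left, hperp, neg_zero])) (hend d hd hperp)

end InnerProductSpace

namespace Complex

theorem exists_norm_eq_inner_eq_zero (w : ℂ) {r : ℝ} (hr : 0 ≤ r) :
    ∃ d : ℂ, ‖d‖ = r ∧ inner ℝ d w = 0 := by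
  rcases eq_or_ne w 0 with rfl | hw
  · exact ⟨r, by rw [norm_real, Real.norm_of_nonneg hr], inner_zero_right _⟩
  refine ⟨(r / ‖w‖) • (I * w), ?_, ?_⟩
  · rw [norm_smul, norm_mul, norm_I, one_mul, Real.norm_of_nonneg (by positivity),
      div_mul_cancel₀ _ (norm_ne_zero_iff.mpr hw)]
  · rw [real_inner_smul_left, Complex.inner, map_mul, conj_I, mul_left_comm, mul_conj]
    simp

theorem sq_lt_dist_sq_add_sq_of_not_exists_diameter_subset {c₁ c₂ : ℂ} {r₁ r₂ : ℝ}
    (hr₁ : 0 ≤ r₁) (hr₂ : 0 ≤ r₂)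
    (h : ¬ ∃ d : ℂ, ‖d‖ = r₁ ∧
      segment ℝ (c₁ - d) (c₁ + d) ⊆ closedBall c₁ r₁ ∩ closedBall c₂ r₂) :
    r₂ ^ 2 < dist c₁ c₂ ^ 2 + r₁ ^ 2 := by
  by_contra! hle
  obtain ⟨d, hd, hperp⟩ := exists_norm_eq_inner_eq_zero (c₂ - c₁) hr₁
  exact h ⟨d, hd, segment_subset_closedBall_inter_closedBall hr₂ hd hperp hle⟩

end Complex

theorem ball_intersection_in_strictly_smaller_ball_general
    (c₁ c₂ : ℂ) (r₁ r₂ : ℝ) (hr₁ : 0 < r₁) (hr₂ : 0 < r₂)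
    (hd₁ : ¬ ∃ d : ℂ, ‖d‖ = r₁ ∧
      segment ℝ (c₁ - d) (c₁ + d) ⊆ Metric.closedBall c₁ r₁ ∩ Metric.closedBall c₂ r₂)
    (hd₂ : ¬ ∃ d : ℂ, ‖d‖ = r₂ ∧
      segment ℝ (c₂ - d) (c₂ + d) ⊆ Metric.closedBall c₁ r₁ ∩ Metric.closedBall c₂ r₂) :
    ∃ (c : ℂ) (r : ℝ), r < r₁ ∧ r < r₂ ∧
      Metric.closedBall c₁ r₁ ∩ Metric.closedBall c₂ r₂ ⊆ Metric.closedBall c r := by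
  have h₁ := Complex.sq_lt_dist_sq_add_sq_of_not_exists_diameter_subset hr₁.le hr₂.le hd₁
  rw [Set.inter_comm] at hd₂
  have h₂ := Complex.sq_lt_dist_sq_add_sq_of_not_exists_diameter_subset hr₂.le hr₁.le hd₂
  rw [dist_comm] at h₂
  exact exists_closedBall_lt_of_sq_lt_dist_sq_add_sq hr₁ hr₂ h₁ h₂

/-- If two closed round balls in the plane intersect, and their intersection does not
contain a diameter of either ball, then the intersection is contained in a closed ball
of strictly smaller diameter than both. -/
theorem ball_intersection_in_strictly_smaller_ball
    (c₁ c₂ : ℂ) (r₁ r₂ : ℝ) (hr₁ : 0 < r₁) (hr₂ : 0 < r₂)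
    (hne : (Metric.closedBall c₁ r₁ ∩ Metric.closedBall c₂ r₂).Nonempty)
    (hd₁ : ¬ ∃ d : ℂ, ‖d‖ = r₁ ∧
      segment ℝ (c₁ - d) (c₁ + d) ⊆ Metric.closedBall c₁ r₁ ∩ Metric.closedBall c₂ r₂)
    (hd₂ : ¬ ∃ d : ℂ, ‖d‖ = r₂ ∧
      segment ℝ (c₂ - d) (c₂ + d) ⊆ Metric.closedBall c₁ r₁ ∩ Metric.closedBall c₂ r₂) :
    ∃ (c : ℂ) (r : ℝ), r < r₁ ∧ r < r₂ ∧
      Metric.closedBall c₁ r₁ ∩ Metric.closedBall c₂ r₂ ⊆ Metric.closedBall c r :=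
  ball_intersection_in_strictly_smaller_ball_general c₁ c₂ r₁ r₂ hr₁ hr₂ hd₁ hd₂
end

section
/- Let h_t : S¹ → ℂ (t ∈ [0,1]) be a homotopy and f a continuous map defined on ⋃_{t∈[0,1]} h_t(S¹) with no fixed points there. Then ind(f, h₀) = ind(f, h₁). -/
/-!
`ℝ × ℝ` is simply connected and `exp : ℂ → ℂ ∖ {0}` is a covering map, so the nonvanishing map
`(s, t) ↦ f (H s t) - H s t` (with `s` clamped to `[0, 1]`) has a continuous logarithm `L`.
By periodicity `L (s, 1) - L (s, 0) ∈ 2πiℤ`, and it depends continuously on `s`, so it is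
constant. At `s = 0` and `s = 1` its imaginary part is `2π (vᵢ 1 - vᵢ 0)`, because two continuous
lifts through `exp` of the same map differ by a constant.
-/

open Complex Real

namespace Complex

theorem exists_continuous_exp_eq {A : Type*} [TopologicalSpace A] [SimplyConnectedSpace A]
    [LocallyPathConnectedSpace A] {g : A → ℂ} (hg : Continuous g) (hg0 : ∀ a, g a ≠ 0) :
    ∃ L : A → ℂ, Continuous L ∧ ∀ a, exp (L a) = g a := by
  obtain ⟨a₀⟩ : Nonempty A := inferInstance
  obtain ⟨L, ⟨-, hL⟩, -⟩ := isCoveringMapOn_exp.existsUnique_continuousMap_lifts ⟨g, hg⟩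
    (exp_log (hg0 a₀)) hg0
  exact ⟨L, L.continuous, congrFun hL⟩

theorem sub_eq_sub_of_exp_eq {X : Type*} [TopologicalSpace X] [PreconnectedSpace X]
    {a b : X → ℂ} (ha : Continuous a) (hb : Continuous b) (h : ∀ x, exp (a x) = exp (b x))
    (x y : X) : a x - b x = a y - b y := by
  have hshift : a = fun z => b z + (a x - b x) :=
    isCoveringMap_exp.eq_of_comp_eq ha (by fun_prop)
      (funext fun z => Subtype.ext (by simp [exp_add, exp_sub, h])) x (by ring)
  linear_combination -congrFun hshift y

theorem im_sub_eq_of_exp_eq_norm_mul_exp {X : Type*} [TopologicalSpace X] [PreconnectedSpace X]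
    {L : X → ℂ} {θ : X → ℝ} (hL : Continuous L) (hθ : Continuous θ)
    (h : ∀ x, exp (L x) = ‖exp (L x)‖ * exp (θ x * I)) (x y : X) :
    (L x).im - θ x = (L y).im - θ y := by
  have key := sub_eq_sub_of_exp_eq hL (b := fun x => (L x).re + θ x * I) (by fun_prop)
    (fun x => by rw [h x, exp_add, norm_exp, ofReal_exp]) x y
  simpa using congrArg im key

end Complex

/-- Homotopy invariance of the index: if `H` is a homotopy of loops (each level a loop of
period 1) and `f` has no fixed points on the image of the homotopy, then the index of `f`
with respect to the initial loop equals the index with respect to the terminal loop.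
The indices are expressed via continuous lifts `v₀`, `v₁` of the direction maps. -/
theorem index_homotopy_invariant
    (H : ℝ → ℝ → ℂ) (f : ℂ → ℂ)
    (hH : Continuous fun p : ℝ × ℝ => H p.1 p.2)
    (hper : ∀ s t : ℝ, H s (t + 1) = H s t)
    (hf : ContinuousOn f {z : ℂ | ∃ s ∈ Set.Icc (0:ℝ) 1, ∃ t : ℝ, H s t = z})
    (hfp : ∀ s ∈ Set.Icc (0:ℝ) 1, ∀ t : ℝ, f (H s t) ≠ H s t)
    (v₀ v₁ : ℝ → ℝ) (hv₀ : Continuous v₀) (hv₁ : Continuous v₁)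
    (hl₀ : ∀ t : ℝ, f (H 0 t) - H 0 t =
      (‖f (H 0 t) - H 0 t‖ : ℂ) *
        Complex.exp (((2 * Real.pi * v₀ t : ℝ) : ℂ) * Complex.I))
    (hl₁ : ∀ t : ℝ, f (H 1 t) - H 1 t =
      (‖f (H 1 t) - H 1 t‖ : ℂ) *
        Complex.exp (((2 * Real.pi * v₁ t : ℝ) : ℂ) * Complex.I)) :
    v₀ 1 - v₀ 0 = v₁ 1 - v₁ 0 := by
  set σ : ℝ → ℝ := fun s => Set.projIcc (0:ℝ) 1 zero_le_one s
  have hσ0 : σ 0 = 0 := congrArg Subtype.val (Set.projIcc_left _)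
  have hσ1 : σ 1 = 1 := congrArg Subtype.val (Set.projIcc_right _)
  have hσ : Continuous σ := continuous_subtype_val.comp continuous_projIcc
  have hHσ : Continuous fun p : ℝ × ℝ => H (σ p.1) p.2 := hH.comp (hσ.prodMap continuous_id)
  obtain ⟨L, hLc, hL⟩ := exists_continuous_exp_eq
    (g := fun p : ℝ × ℝ => f (H (σ p.1) p.2) - H (σ p.1) p.2)
    ((hf.comp_continuous hHσ fun p => ⟨σ p.1, Subtype.mem _, p.2, rfl⟩).sub hHσ)
    fun p => sub_ne_zero.mpr (hfp _ (Subtype.mem _) _)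
  have hloop := sub_eq_sub_of_exp_eq (a := fun s => L (s, 1)) (b := fun s => L (s, 0))
    (by fun_prop) (by fun_prop) (fun s => by simp only [hL]; rw [← zero_add 1, hper]) 0 1
  have h₀ := im_sub_eq_of_exp_eq_norm_mul_exp (L := fun t => L (0, t))
    (θ := fun t => 2 * π * v₀ t) (by fun_prop) (by fun_prop)
    (fun t => by simp only [hL, hσ0]; exact hl₀ t) 1 0
  have h₁ := im_sub_eq_of_exp_eq_norm_mul_exp (L := fun t => L (1, t))
    (θ := fun t => 2 * π * v₁ t) (by fun_prop) (by fun_prop)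
    (fun t => by simp only [hL, hσ1]; exact hl₁ t) 1 0
  have him := congrArg im hloop
  simp only [sub_im] at him
  have h2π : 2 * π * (v₀ 1 - v₀ 0) = 2 * π * (v₁ 1 - v₁ 0) := by linarith
  exact mul_left_cancel₀ (by positivity) h2π
end

section
/- Let X ⊂ ℂ be a plane continuum and f : ℂ → ℂ a perfect surjection with f⁻¹(T(X)) = T(X) and f confluent on ℂ \ T(X). Then for each y ∈ ℂ \ T(X), every component of f⁻¹(y) is acyclic (nonseparating). -/
/-!
If a component `C` of the fiber `f⁻¹(y)` separated the plane, some component `W` of `ℂ \ C`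
would miss the connected hull `T = T(X)`. `W` is not contained in the fiber, since otherwise
`C ∪ closure W` would be a larger connected subset of it, so `f z ≠ y` for some `z ∈ W`.
As `f⁻¹(T) = T`, the closed set `f(closure W)` misses `T`; it cannot contain all of
`(ℂ \ T) \ {y}`, for then `ℂ \ T` would be clopen. Join `f z` to an omitted value `v` by an arc
in the connected open set `(ℂ \ T) \ {y}`: by confluence the component through `z` of the
preimage of the arc maps onto it, and it lies in `W` because it avoids `C`. Hence `v ∈ f(W)`,
a contradiction.
-/

/-- The topological hull `T(S)` of a plane compactum: all points whose connected component
in the complement of `S` is bounded. -/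
def TopHull (S : Set ℂ) : Set ℂ :=
  {z : ℂ | Bornology.IsBounded (connectedComponentIn Sᶜ z)}

open Set Metric Bornology

section Topology

variable {α : Type*} [TopologicalSpace α]

theorem IsClosed.connectedComponentIn {F : Set α} (hF : IsClosed F) (x : α) :
    IsClosed (connectedComponentIn F x) := by
  by_cases hx : x ∈ F
  · refine closure_subset_iff_isClosed.1 <|
      isPreconnected_connectedComponentIn.closure.subset_connectedComponentIn
        (subset_closure (mem_connectedComponentIn hx)) ?_
    exact closure_minimal (connectedComponentIn_subset F x) hF
  · rw [connectedComponentIn_eq_empty hx]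
    exact isClosed_empty

theorem exists_connectedComponentIn_disjoint_of_not_isPreconnected {T U : Set α}
    (hT : IsPreconnected T) (hTU : T ⊆ U) (hU : ¬IsPreconnected U) :
    ∃ z ∈ U, Disjoint (connectedComponentIn U z) T := by
  by_contra! h
  rcases U.eq_empty_or_nonempty with rfl | ⟨z, hz⟩
  · exact hU isPreconnected_empty
  obtain ⟨p, -, hpT⟩ := not_disjoint_iff.1 (h z hz)
  have hTp : T ⊆ connectedComponentIn U p := hT.subset_connectedComponentIn hpT hTU
  have hUp : U = connectedComponentIn U p := by
    refine subset_antisymm (fun w hw => ?_) (connectedComponentIn_subset U p)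
    obtain ⟨q, hqw, hqT⟩ := not_disjoint_iff.1 (h w hw)
    rw [connectedComponentIn_eq (hTp hqT), ← connectedComponentIn_eq hqw]
    exact mem_connectedComponentIn hw
  exact hU (by rw [hUp]; exact isPreconnected_connectedComponentIn)

theorem IsOpen.not_diff_singleton_subset [PreconnectedSpace α] [T1Space α] {U F : Set α}
    (hU : IsOpen U) (hU0 : U.Nonempty) (hU1 : U ≠ univ) (hF : IsClosed F) (hFU : F ⊆ U) (y : α) :
    ¬U \ {y} ⊆ F := by
  intro h
  have hUF : U = F ∪ (U ∩ {y}) := by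
    refine subset_antisymm (fun w hw => ?_) (union_subset hFU inter_subset_left)
    by_cases hwy : w = y
    · exact Or.inr ⟨hw, hwy⟩
    · exact Or.inl (h ⟨hw, hwy⟩)
  have hUc : IsClosed U :=
    hUF ▸ hF.union (subsingleton_singleton.anti inter_subset_right).isClosed
  rcases isClopen_iff.1 ⟨hUc, hU⟩ with h0 | h1
  · exact hU0.ne_empty h0
  · exact hU1 h1

section LocallyConnected

variable [LocallyConnectedSpace α]

theorem IsOpen.closure_connectedComponentIn_inter_subset {U : Set α} (hU : IsOpen U) (x : α) :
    closure (connectedComponentIn U x) ∩ U ⊆ connectedComponentIn U x := by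
  rintro t ⟨ht, htU⟩
  obtain ⟨u, hut, hux⟩ := mem_closure_iff_nhds.1 ht _
    (hU.connectedComponentIn.mem_nhds (mem_connectedComponentIn htU))
  rw [connectedComponentIn_eq hux, ← connectedComponentIn_eq hut]
  exact mem_connectedComponentIn htU

theorem isPreconnected_diff_singleton_of_isOpen [T1Space α] {U B : Set α} {y : α}
    (hUp : IsPreconnected U) (hU : IsOpen U) (hB : IsOpen B) (hyB : y ∈ B) (hBU : B ⊆ U)
    (hBp : IsPreconnected (B \ {y})) : IsPreconnected (U \ {y}) := by
  rcases (B \ {y}).eq_empty_or_nonempty with hB0 | ⟨p, hp⟩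
  · have hy : IsClopen ({y} : Set α) := by
      refine ⟨isClosed_singleton, ?_⟩
      rwa [← (sdiff_eq_empty.1 hB0).antisymm (singleton_subset_iff.2 hyB)]
    rw [sdiff_eq_empty.2 (hUp.subset_isClopen hy ⟨y, hBU hyB, rfl⟩)]
    exact isPreconnected_empty
  -- the component `A` of `U \ {y}` through the punctured neighbourhood, with `B` added, is
  -- clopen in `U`
  have hUy : IsOpen (U \ {y}) := hU.sdiff isClosed_singleton
  set A := connectedComponentIn (U \ {y}) p
  have hBA : B \ {y} ⊆ A := hBp.subset_connectedComponentIn hp (sdiff_subset_sdiff_left hBU)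
  have hcover : U ⊆ (A ∪ B) ∪ ((U \ {y}) \ closure A) := by
    intro w hwU
    by_cases hwy : w = y
    · exact Or.inl (Or.inr (hwy ▸ hyB))
    by_cases hwA : w ∈ closure A
    · exact Or.inl (Or.inl (hUy.closure_connectedComponentIn_inter_subset p ⟨hwA, hwU, hwy⟩))
    · exact Or.inr ⟨⟨hwU, hwy⟩, hwA⟩
  have hdisj : Disjoint (A ∪ B) ((U \ {y}) \ closure A) := by
    refine disjoint_union_left.2 ⟨disjoint_sdiff_right.mono_left subset_closure, ?_⟩
    exact disjoint_left.2 fun w hwB hw => hw.2 (subset_closure (hBA ⟨hwB, hw.1.2⟩))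
  have hUAB : U ⊆ A ∪ B := hUp.subset_left_of_subset_union (hUy.connectedComponentIn.union hB)
    (hUy.sdiff isClosed_closure) hdisj hcover ⟨p, hBU hp.1, Or.inr hp.1⟩
  have hUA : U \ {y} = A := by
    refine subset_antisymm (fun w hw => ?_) (connectedComponentIn_subset _ _)
    exact (hUAB hw.1).elim id fun hwB => hBA ⟨hwB, hw.2⟩
  rw [hUA]
  exact isPreconnected_connectedComponentIn

variable [PreconnectedSpace α]

theorem isPreconnected_union_closure_connectedComponentIn_compl {S : Set α}
    (hS : IsPreconnected S) (hSc : IsClosed S) (z : α) :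
    IsPreconnected (S ∪ closure (connectedComponentIn Sᶜ z)) := by
  set W := connectedComponentIn Sᶜ z
  rcases (closure W ∩ S).eq_empty_or_nonempty with h | ⟨c, hcW, hcS⟩
  · have hWc : IsClosed W := closure_subset_iff_isClosed.1 fun t ht =>
      hSc.isOpen_compl.closure_connectedComponentIn_inter_subset z
        ⟨ht, fun htS => h.subset ⟨ht, htS⟩⟩
    rcases isClopen_iff.1 ⟨hWc, hSc.isOpen_compl.connectedComponentIn⟩ with hW | hW
    · simpa [hW] using hS
    · simpa [hW] using isPreconnected_univ
  · exact hS.union c hcS hcW isPreconnected_connectedComponentIn.closure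

theorem connectedComponentIn_compl_connectedComponentIn_not_subset {F : Set α} {x z : α}
    (hF : IsClosed F) (hx : x ∈ F) (hz : z ∉ connectedComponentIn F x) :
    ¬connectedComponentIn (connectedComponentIn F x)ᶜ z ⊆ F := by
  intro hWF
  have hD := (isPreconnected_union_closure_connectedComponentIn_compl
    isPreconnected_connectedComponentIn (hF.connectedComponentIn x) z).subset_connectedComponentIn
      (Or.inl (mem_connectedComponentIn hx))
      (union_subset (connectedComponentIn_subset F x) (closure_minimal hWF hF))
  exact hz (hD (Or.inr (subset_closure (mem_connectedComponentIn hz))))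

end LocallyConnected

end Topology

def IsConfluentOn {α β : Type*} [TopologicalSpace α] [TopologicalSpace β] (f : α → β)
    (V : Set β) : Prop :=
  ∀ K ⊆ V, IsCompact K → IsConnected K → ∀ x ∈ f ⁻¹' K, f '' connectedComponentIn (f ⁻¹' K) x = K

theorem IsConfluentOn.subset_image_connectedComponentIn {α β : Type*} [TopologicalSpace α]
    [TopologicalSpace β] {f : α → β} {V K : Set β} {C : Set α} (hf : IsConfluentOn f V)
    (hKV : K ⊆ V) (hK : IsCompact K) (hKc : IsConnected K) (hKC : Disjoint (f ⁻¹' K) C)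
    {z : α} (hz : f z ∈ K) : K ⊆ f '' connectedComponentIn Cᶜ z := by
  rw [← hf K hKV hK hKc z hz]
  exact image_mono <| isPreconnected_connectedComponentIn.subset_connectedComponentIn
    (mem_connectedComponentIn hz) ((connectedComponentIn_subset _ _).trans hKC.subset_compl_right)

section NormedSpace

variable {E : Type*} [NormedAddCommGroup E] [NormedSpace ℝ E]

theorem isPreconnected_setOf_dist_mem (hE : 1 < Module.rank ℝ E) (c : E) {I : Set ℝ}
    (hI : IsPreconnected I) (hI0 : I ⊆ Ioi 0) : IsPreconnected {w | dist w c ∈ I} := by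
  have hpolar : (fun p : ℝ × E => c + p.1 • p.2) '' (I ×ˢ sphere 0 1) = {w | dist w c ∈ I} := by
    ext w
    constructor
    · rintro ⟨⟨t, u⟩, ⟨ht, hu⟩, rfl⟩
      rw [mem_sphere_zero_iff_norm] at hu
      have ht0 : 0 < t := hI0 ht
      simpa [dist_eq_norm, norm_smul, hu, abs_of_pos ht0] using ht
    · intro hw
      have hd : 0 < dist w c := hI0 hw
      refine ⟨⟨dist w c, (dist w c)⁻¹ • (w - c)⟩, ⟨hw, ?_⟩, ?_⟩
      · rw [mem_sphere_zero_iff_norm, norm_smul, ← dist_eq_norm, norm_inv, Real.norm_eq_abs,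
          abs_of_pos hd, inv_mul_cancel₀ hd.ne']
      · simp [smul_smul, mul_inv_cancel₀ hd.ne']
  rw [← hpolar]
  exact (hI.prod (isPreconnected_sphere hE 0 1)).image _ (by fun_prop)

theorem isPreconnected_ball_diff_center (hE : 1 < Module.rank ℝ E) (c : E) (r : ℝ) :
    IsPreconnected (ball c r \ {c}) := by
  convert isPreconnected_setOf_dist_mem hE c isPreconnected_Ioo
    (Ioo_subset_Ioi_self : Ioo 0 r ⊆ Ioi 0) using 1
  ext w
  simp [dist_pos, and_comm]

theorem isPreconnected_compl_closedBall (hE : 1 < Module.rank ℝ E) (c : E) {R : ℝ}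
    (hR : 0 ≤ R) : IsPreconnected (closedBall c R)ᶜ := by
  convert isPreconnected_setOf_dist_mem hE c isPreconnected_Ioi (Ioi_subset_Ioi hR) using 1
  ext w
  simp

theorem IsOpen.isPreconnected_diff_singleton (hE : 1 < Module.rank ℝ E) {U : Set E}
    (hU : IsOpen U) (hUp : IsPreconnected U) (y : E) : IsPreconnected (U \ {y}) := by
  by_cases hyU : y ∈ U
  · obtain ⟨r, hr, hball⟩ := Metric.isOpen_iff.1 hU y hyU
    exact isPreconnected_diff_singleton_of_isOpen hUp hU isOpen_ball (mem_ball_self hr) hball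
      (isPreconnected_ball_diff_center hE y r)
  · rwa [sdiff_singleton_eq_self hyU]

theorem isConnected_compl_connectedComponentIn_preimage_singleton (hE : 1 < Module.rank ℝ E)
    {T : Set E} (hTc : IsClosed T) (hT0 : T.Nonempty) (hTp : IsPreconnected T)
    (hTcp : IsPreconnected Tᶜ) {f : E → E} (hf : Continuous f) (hfc : IsClosedMap f)
    (hinv : f ⁻¹' T = T) (hconfl : IsConfluentOn f Tᶜ) {y : E} (hy : y ∉ T) {x : E}
    (hx : x ∈ f ⁻¹' {y}) : IsConnected (connectedComponentIn (f ⁻¹' {y}) x)ᶜ := by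
  set C := connectedComponentIn (f ⁻¹' {y}) x
  have hTC : T ⊆ Cᶜ := fun u huT huC => by
    rw [← hinv] at huT
    exact hy (mem_singleton_iff.1 (connectedComponentIn_subset (f ⁻¹' {y}) x huC) ▸ huT)
  refine ⟨hT0.mono hTC, ?_⟩
  by_contra hC
  obtain ⟨z₀, hz₀, hWT⟩ := exists_connectedComponentIn_disjoint_of_not_isPreconnected hTp hTC hC
  set W := connectedComponentIn Cᶜ z₀
  obtain ⟨z, hzW, hzy⟩ := not_subset.1 <|
    connectedComponentIn_compl_connectedComponentIn_not_subset
      (isClosed_singleton.preimage hf) hx hz₀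
  -- the frontier of `W` lies in `C`, which misses `T`
  have hWT' : closure W ⊆ Tᶜ := fun u hu huT => disjoint_left.1 hWT
    (((isClosed_singleton.preimage hf).connectedComponentIn x).isOpen_compl
      |>.closure_connectedComponentIn_inter_subset z₀ ⟨hu, hTC huT⟩) huT
  have hfWT : f '' closure W ⊆ Tᶜ := by rwa [image_subset_iff, preimage_compl, hinv]
  obtain ⟨v, ⟨hvT, hvy⟩, hvW⟩ := not_subset.1 <| hTc.isOpen_compl.not_diff_singleton_subset
    ⟨y, hy⟩ (compl_ne_univ.2 hT0) (hfc _ isClosed_closure) hfWT y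
  have hO : IsPathConnected (Tᶜ \ {y}) :=
    (hTc.isOpen_compl.sdiff isClosed_singleton).isConnected_iff_isPathConnected.1
      ⟨⟨v, hvT, hvy⟩, hTc.isOpen_compl.isPreconnected_diff_singleton hE hTcp y⟩
  obtain ⟨γ, hγ⟩ := hO.joinedIn (f z) ⟨hfWT ⟨z, subset_closure hzW, rfl⟩, hzy⟩ v ⟨hvT, hvy⟩
  have hγC : Disjoint (f ⁻¹' range γ) C := disjoint_left.2 fun u ⟨t, ht⟩ huC =>
    (hγ t).2 (ht ▸ connectedComponentIn_subset (f ⁻¹' {y}) x huC)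
  have hvz := hconfl.subset_image_connectedComponentIn (K := range γ)
    (fun _ ⟨t, ht⟩ => ht ▸ (hγ t).1) (isCompact_range γ.continuous)
    (isConnected_range γ.continuous) hγC ⟨0, γ.source⟩ ⟨1, γ.target⟩
  rw [← connectedComponentIn_eq hzW] at hvz
  exact hvW (image_mono subset_closure hvz)

end NormedSpace

theorem Complex.one_lt_rank_real : 1 < Module.rank ℝ ℂ := by
  rw [Complex.rank_real_complex]
  exact Nat.one_lt_ofNat

theorem subset_topHull (X : Set ℂ) : X ⊆ TopHull X := fun z hz => by
  show IsBounded (connectedComponentIn Xᶜ z)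
  rw [connectedComponentIn_eq_empty (not_not.2 hz)]
  exact isBounded_empty

theorem mem_topHull_iff_of_mem_connectedComponentIn {X : Set ℂ} {z u : ℂ}
    (hu : u ∈ connectedComponentIn Xᶜ z) : u ∈ TopHull X ↔ z ∈ TopHull X := by
  show IsBounded (connectedComponentIn Xᶜ u) ↔ IsBounded (connectedComponentIn Xᶜ z)
  rw [connectedComponentIn_eq hu]

theorem isOpen_compl_topHull {X : Set ℂ} (hX : IsClosed X) : IsOpen (TopHull X)ᶜ := by
  refine isOpen_iff_forall_mem_open.2 fun z hz => ⟨connectedComponentIn Xᶜ z,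
    fun u hu => (mem_topHull_iff_of_mem_connectedComponentIn hu).not.2 hz,
    hX.isOpen_compl.connectedComponentIn, mem_connectedComponentIn ?_⟩
  exact fun hzX => hz (subset_topHull X hzX)

theorem isPreconnected_topHull {X : Set ℂ} (hX : IsConnected X) (hXc : IsClosed X) :
    IsPreconnected (TopHull X) := by
  obtain ⟨x₀, hx₀⟩ := hX.nonempty
  have hT : IsClosed (TopHull X) := isOpen_compl_iff.1 (isOpen_compl_topHull hXc)
  refine isPreconnected_of_forall x₀ fun z hz => ⟨_, ?_, Or.inl hx₀, ?_,
    isPreconnected_union_closure_connectedComponentIn_compl hX.isPreconnected hXc z⟩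
  · refine union_subset (subset_topHull X) (closure_minimal (fun u hu => ?_) hT)
    exact (mem_topHull_iff_of_mem_connectedComponentIn hu).2 hz
  · by_cases hzX : z ∈ X
    · exact Or.inl hzX
    · exact Or.inr (subset_closure (mem_connectedComponentIn hzX))

theorem isPreconnected_compl_topHull {X : Set ℂ} (hX : IsBounded X) :
    IsPreconnected (TopHull X)ᶜ := by
  obtain ⟨R, hR, hXR⟩ := hX.subset_closedBall_lt 0 0
  have hG := isPreconnected_compl_closedBall Complex.one_lt_rank_real 0 hR.le
  obtain ⟨g₀, hg₀⟩ := NormedField.exists_lt_norm ℂ R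
  refine isPreconnected_of_forall g₀ fun z hz => ⟨connectedComponentIn Xᶜ z,
    fun u hu => (mem_topHull_iff_of_mem_connectedComponentIn hu).not.2 hz, ?_,
    mem_connectedComponentIn fun hzX => hz (subset_topHull X hzX),
    isPreconnected_connectedComponentIn⟩
  obtain ⟨g, hgz, hgR⟩ := not_subset.1 fun h : connectedComponentIn Xᶜ z ⊆ closedBall 0 R =>
    hz (isBounded_closedBall.subset h)
  rw [connectedComponentIn_eq hgz]
  exact hG.subset_connectedComponentIn hgR (compl_subset_compl.2 hXR) (by simpa using hg₀)

theorem fibers_acyclic_outside_hull_general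
    (X : Set ℂ) (hXc : IsCompact X) (hXconn : IsConnected X)
    (f : ℂ → ℂ) (hc : Continuous f)
    (hclosed : IsClosedMap f)
    (hinv : f ⁻¹' (TopHull X) = TopHull X)
    (hconfl : ∀ K : Set ℂ, K ⊆ (TopHull X)ᶜ → IsCompact K → IsConnected K →
      ∀ x ∈ f ⁻¹' K, f '' connectedComponentIn (f ⁻¹' K) x = K) :
    ∀ y ∉ TopHull X, ∀ x ∈ f ⁻¹' {y},
      IsConnected ((connectedComponentIn (f ⁻¹' {y}) x)ᶜ) := fun _ hy _ hx =>
  isConnected_compl_connectedComponentIn_preimage_singleton Complex.one_lt_rank_real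
    (isOpen_compl_iff.1 (isOpen_compl_topHull hXc.isClosed))
    (hXconn.nonempty.mono (subset_topHull X)) (isPreconnected_topHull hXconn hXc.isClosed)
    (isPreconnected_compl_topHull hXc.isBounded) hc hclosed hinv hconfl hy hx

/-- Let `X ⊆ ℂ` be a continuum and `f : ℂ → ℂ` a perfect surjection with
`f⁻¹(T(X)) = T(X)` and `f` confluent on `ℂ \ T(X)`. Then for each `y ∉ T(X)` every
connected component of `f⁻¹(y)` is acyclic (its complement is connected). -/
theorem fibers_acyclic_outside_hull
    (X : Set ℂ) (hXc : IsCompact X) (hXconn : IsConnected X)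
    (f : ℂ → ℂ) (hc : Continuous f) (hsurj : Function.Surjective f)
    (hclosed : IsClosedMap f) (hfib : ∀ y : ℂ, IsCompact (f ⁻¹' {y}))
    (hinv : f ⁻¹' (TopHull X) = TopHull X)
    (hconfl : ∀ K : Set ℂ, K ⊆ (TopHull X)ᶜ → IsCompact K → IsConnected K →
      ∀ x ∈ f ⁻¹' K, f '' connectedComponentIn (f ⁻¹' K) x = K) :
    ∀ y ∉ TopHull X, ∀ x ∈ f ⁻¹' {y},
      IsConnected ((connectedComponentIn (f ⁻¹' {y}) x)ᶜ) :=
  fibers_acyclic_outside_hull_general X hXc hXconn f hc hclosed hinv hconfl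
end

section
/- Let K ⊂ ℂ be a nondegenerate compact set whose complement U∞ in the Riemann sphere is connected. Then for every point p ∈ U∞ there exists a closed round ball B (in the spherical metric) with interior contained in U∞ and |∂B ∩ K| ≥ 2 such that p belongs to the hyperbolic convex hull of B ∩ K taken inside B. -/
/-!
Project stereographically from `p`. A cap `cap u t` through `p` whose interior misses `K`
becomes the outside of a closed disk containing `K`, and `capDepth ⟪p, u⟫ t` is the curvature
of that disk, so a cap of maximal depth, which exists by compactness, is the smallest disk
containing `K`. As for the classical minimal enclosing circle, its centre lies in the convex hull
of the contact points `∂B ∩ K`: otherwise a direction separating the centre from that hull would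
move the disk to a smaller one (on the sphere: rotating `u` towards it increases the depth).
On the sphere the centre condition reads `β • p + γ • u ∈ conv (∂B ∩ K)` with `β > 0` and
`β + γ t = 1`. A hyperbolic half-plane `cap v s` of `B` has `⟪u, v⟫ = t s`, so pairing with `v`
gives `s ≤ ⟪p, v⟫`, i.e. `p` lies in it. A single contact point would put `β • p + γ • u` on the
sphere, which forces `p ∈ ∂B`.
-/

/-- The round 2-sphere (model of the Riemann sphere `ℂ∞`). -/
def Sph : Set (EuclideanSpace ℝ (Fin 3)) := Metric.sphere 0 1

/-- A closed round ball (spherical cap) on the sphere, with spherical center `u` and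
"height" `t ∈ (-1,1)`: `{x ∈ S² | ⟪x,u⟫ ≥ t}`. -/
def cap (u : EuclideanSpace ℝ (Fin 3)) (t : ℝ) : Set (EuclideanSpace ℝ (Fin 3)) :=
  {x ∈ Sph | t ≤ (inner ℝ x u : ℝ)}

/-- The interior of the cap within the sphere. -/
def capInt (u : EuclideanSpace ℝ (Fin 3)) (t : ℝ) : Set (EuclideanSpace ℝ (Fin 3)) :=
  {x ∈ Sph | t < (inner ℝ x u : ℝ)}

/-- The boundary circle of the cap. -/
def capBd (u : EuclideanSpace ℝ (Fin 3)) (t : ℝ) : Set (EuclideanSpace ℝ (Fin 3)) :=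
  {x ∈ Sph | (inner ℝ x u : ℝ) = t}

/-- `cap u t` is a Kulkarni–Pinkall ball for the compact set `K`: a round ball whose
interior misses `K` and whose boundary circle meets `K` in at least two points. -/
def IsKPBall (K : Set (EuclideanSpace ℝ (Fin 3))) (u : EuclideanSpace ℝ (Fin 3))
    (t : ℝ) : Prop :=
  u ∈ Sph ∧ t ∈ Set.Ioo (-1 : ℝ) 1 ∧ capInt u t ∩ K = ∅ ∧ Set.Nontrivial (capBd u t ∩ K)

/-- The hyperbolic convex hull of `A` inside the ball `cap u t`: the intersection of the
cap with all closed hyperbolic half-planes of the cap containing `A`. A closed hyperbolic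
half-plane of `cap u t` is `cap u t ∩ cap v s` where the boundary circle of `cap v s`
meets the boundary circle of `cap u t` orthogonally, which is expressed by the relation
`⟪u,v⟫ = t * s`. -/
def hypHull (u : EuclideanSpace ℝ (Fin 3)) (t : ℝ)
    (A : Set (EuclideanSpace ℝ (Fin 3))) : Set (EuclideanSpace ℝ (Fin 3)) :=
  cap u t ∩ ⋂₀ {H | ∃ v ∈ Sph, ∃ s ∈ Set.Ioo (-1 : ℝ) 1,
    (inner ℝ u v : ℝ) = t * s ∧ A ⊆ cap v s ∧ H = cap v s}

open Set Filter Topology Metric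
open scoped RealInnerProductSpace

/-- For `m = ⟪p, u⟫`, the Lorentzian pairing of the light-like vector `(p, 1)` with the unit
normal `(u, t) / √(1 - t²)` of `cap u t`; after stereographic projection from `p` it is the
curvature of the image of the boundary circle. -/
noncomputable def capDepth (m t : ℝ) : ℝ := (m - t) / √(1 - t ^ 2)

lemma one_sub_sq_pos_of_mem_Ioo {t : ℝ} (ht : t ∈ Ioo (-1 : ℝ) 1) : 0 < 1 - t ^ 2 := by
  nlinarith [ht.1, ht.2]

lemma capDepth_nonpos {m t : ℝ} (h : m ≤ t) : capDepth m t ≤ 0 :=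
  div_nonpos_of_nonpos_of_nonneg (sub_nonpos.2 h) (Real.sqrt_nonneg _)

lemma capDepth_pos {m t : ℝ} (ht : t ∈ Ioo (-1 : ℝ) 1) (h : t < m) : 0 < capDepth m t :=
  div_pos (sub_pos.2 h) (Real.sqrt_pos.2 (one_sub_sq_pos_of_mem_Ioo ht))

lemma capDepth_le_capDepth {a b m : ℝ} (ha : -1 < a) (hb : b < 1) (hab : a ≤ b) (hbm : b ≤ m)
    (hm : m ≤ 1) : capDepth m b ≤ capDepth m a := by
  have ha' : 0 < 1 - a ^ 2 := by nlinarith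
  have hb' : 0 < 1 - b ^ 2 := by nlinarith
  rw [capDepth, capDepth, div_le_div_iff₀ (Real.sqrt_pos.2 hb') (Real.sqrt_pos.2 ha'),
    ← pow_le_pow_iff_left₀ (by positivity) (by nlinarith [Real.sqrt_nonneg (1 - b ^ 2)])
      two_ne_zero, mul_pow, mul_pow, Real.sq_sqrt ha'.le, Real.sq_sqrt hb'.le]
  have h1 : 0 ≤ (m - a) * (1 - b * m) := mul_nonneg (by linarith) (by nlinarith)
  have h2 : 0 ≤ (m - b) * (1 - a * m) := mul_nonneg (by linarith) (by nlinarith)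
  have key : (m - a) ^ 2 * (1 - b ^ 2) - (m - b) ^ 2 * (1 - a ^ 2) =
      (b - a) * ((m - a) * (1 - b * m) + (m - b) * (1 - a * m)) := by ring
  linarith [mul_nonneg (sub_nonneg.2 hab) (add_nonneg h1 h2)]

lemma HasDerivAt.eventually_nhdsGT_lt {f : ℝ → ℝ} {f' x : ℝ} (hf : HasDerivAt f f' x)
    (hf' : 0 < f') : ∀ᶠ y in 𝓝[>] x, f x < f y := by
  have hslope := (hasDerivAt_iff_tendsto_slope.1 hf).mono_left
    (nhdsWithin_mono x fun y (hy : x < y) => hy.ne')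
  filter_upwards [hslope.eventually_const_lt hf', self_mem_nhdsWithin] with y hy (hxy : x < y)
  rw [slope_def_field, div_pos_iff_of_pos_right (sub_pos.2 hxy)] at hy
  linarith

lemma hasDerivAt_capDepth_rotate {m r t q : ℝ} (ht : t ∈ Ioo (-1 : ℝ) 1) :
    HasDerivAt
      (fun θ => capDepth (Real.cos θ * m + Real.sin θ * r) (Real.cos θ * t + Real.sin θ * q))
      (((r - q) * (1 - t ^ 2) + (m - t) * (t * q)) / √(1 - t ^ 2) ^ 3) 0 := by
  have h1 := one_sub_sq_pos_of_mem_Ioo ht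
  have hrot : ∀ a b : ℝ, HasDerivAt (fun θ => Real.cos θ * a + Real.sin θ * b) b 0 := fun a b => by
    simpa using ((Real.hasDerivAt_cos 0).mul_const a).fun_add ((Real.hasDerivAt_sin 0).mul_const b)
  have hD : HasDerivAt (fun θ => √(1 - (Real.cos θ * t + Real.sin θ * q) ^ 2))
      (-(2 * t * q) / (2 * √(1 - t ^ 2))) 0 := by
    simpa using (((hrot t q).fun_pow 2).const_sub 1).sqrt (by simpa using h1.ne')
  refine (((hrot m r).fun_sub (hrot t q)).fun_div hD
    (by simpa using (Real.sqrt_pos.2 h1).ne')).congr_deriv ?_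
  simp only [Real.sin_zero, Real.cos_zero, zero_mul, one_mul, add_zero]
  field_simp
  rw [Real.sq_sqrt h1.le]
  ring

lemma eventually_capDepth_lt_capDepth_rotate {m r t q : ℝ} (ht : t ∈ Ioo (-1 : ℝ) 1)
    (hd : 0 < (r - q) * (1 - t ^ 2) + (m - t) * (t * q)) :
    ∀ᶠ θ in 𝓝[>] 0, capDepth m t <
      capDepth (Real.cos θ * m + Real.sin θ * r) (Real.cos θ * t + Real.sin θ * q) := by
  have := (hasDerivAt_capDepth_rotate ht).eventually_nhdsGT_lt
    (div_pos hd (pow_pos (Real.sqrt_pos.2 (one_sub_sq_pos_of_mem_Ioo ht)) 3))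
  simpa only [Real.sin_zero, Real.cos_zero, zero_mul, one_mul, add_zero] using this

lemma eventually_nhdsGT_zero_cos_sin {t q η : ℝ} (ht : t < 1) (hη : 0 < η) :
    ∀ᶠ θ in 𝓝[>] 0, 0 < Real.cos θ ∧ 0 < Real.sin θ ∧
      Real.sin θ * (1 - q) ≤ Real.cos θ * η ∧ Real.cos θ * t + Real.sin θ * q < 1 := by
  have h1 : ∀ᶠ θ in 𝓝 (0 : ℝ), 0 < Real.cos θ :=
    continuousAt_const.eventually_lt Real.continuous_cos.continuousAt (by simp)
  have h2 : ∀ᶠ θ in 𝓝 (0 : ℝ), Real.sin θ * (1 - q) < Real.cos θ * η :=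
    (by fun_prop : Continuous fun θ => Real.sin θ * (1 - q)).continuousAt.eventually_lt
      (by fun_prop : Continuous fun θ => Real.cos θ * η).continuousAt (by simpa using hη)
  have h3 : ∀ᶠ θ in 𝓝 (0 : ℝ), Real.cos θ * t + Real.sin θ * q < 1 :=
    (by fun_prop : Continuous fun θ => Real.cos θ * t + Real.sin θ * q).continuousAt.eventually_lt
      continuousAt_const (by simpa using ht)
  filter_upwards [nhdsWithin_le_nhds (h1.and (h2.and h3)), Ioo_mem_nhdsGT Real.pi_pos]
    with θ ⟨hcos, hη', hτ⟩ hθ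
  exact ⟨hcos, Real.sin_pos_of_pos_of_lt_pi hθ.1 hθ.2, hη'.le, hτ⟩

lemma IsCompact.exists_pos_forall_near_lt {X : Type*} [TopologicalSpace X] {K : Set X}
    (hK : IsCompact K) {f g : X → ℝ} (hf : Continuous f) (hg : Continuous g) {t q : ℝ}
    (hft : ∀ x ∈ K, f x ≤ t) (hgq : ∀ x ∈ K, f x = t → g x < q) :
    ∃ η > 0, ∀ x ∈ K, t - η < f x → g x < q := by
  set F := K ∩ {x | q ≤ g x}
  rcases F.eq_empty_or_nonempty with hF | hF
  · exact ⟨1, one_pos, fun x hx _ => not_le.1 fun hqx => hF.subset ⟨hx, hqx⟩⟩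
  obtain ⟨x₀, ⟨hx₀K, hx₀q⟩, hmax⟩ :=
    (hK.inter_right (isClosed_le continuous_const hg)).exists_isMaxOn hF hf.continuousOn
  have hx₀t : f x₀ < t := (hft x₀ hx₀K).lt_of_ne fun h => (hgq x₀ hx₀K h).not_ge hx₀q
  refine ⟨t - f x₀, sub_pos.2 hx₀t, fun x hx hxt => not_le.1 fun hqx => ?_⟩
  have : f x ≤ f x₀ := hmax ⟨hx, hqx⟩
  linarith

section InnerProductSpace

variable {V : Type*} [NormedAddCommGroup V] [InnerProductSpace ℝ V]

lemma norm_cos_smul_add_sin_smul {u h : V} (hu : ‖u‖ = 1) (hh : ‖h‖ = 1) (huh : ⟪u, h⟫ = 0)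
    (θ : ℝ) : ‖Real.cos θ • u + Real.sin θ • h‖ = 1 := by
  have : ‖Real.cos θ • u + Real.sin θ • h‖ ^ 2 = 1 := by
    rw [norm_add_sq_real, norm_smul, norm_smul, real_inner_smul_left, real_inner_smul_right, huh,
      hu, hh]
    simp [Real.cos_sq_add_sin_sq]
  exact (pow_eq_one_iff_of_nonneg (norm_nonneg _) two_ne_zero).1 this

lemma le_inner_of_mem_closedConvexHull {s : Set V} {v c : V} {a : ℝ} (h : ∀ x ∈ s, a ≤ ⟪x, v⟫)
    (hc : c ∈ closedConvexHull ℝ s) : a ≤ ⟪c, v⟫ :=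
  closedConvexHull_min (t := {y | a ≤ ⟪y, v⟫}) h
    (convex_halfSpace_ge ((innerₗ V).flip v).isLinear a)
    (isClosed_le (by fun_prop) (by fun_prop)) hc

lemma inner_eq_of_mem_closedConvexHull {s : Set V} {v c : V} {a : ℝ} (h : ∀ x ∈ s, ⟪x, v⟫ = a)
    (hc : c ∈ closedConvexHull ℝ s) : ⟪c, v⟫ = a :=
  closedConvexHull_min (t := {y | ⟪y, v⟫ = a}) h
    (convex_hyperplane ((innerₗ V).flip v).isLinear a)
    (isClosed_eq (by fun_prop) (by fun_prop)) hc

lemma exists_orthogonal_separating [FiniteDimensional ℝ V] {E : Set V}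
    (hEb : Bornology.IsBounded E) (hEne : E.Nonempty) {x u : V}
    (hx : ∀ γ : ℝ, x + γ • u ∉ closedConvexHull ℝ E) :
    ∃ h : V, ‖h‖ = 1 ∧ ⟪u, h⟫ = 0 ∧ ∃ ε > 0, ∀ k ∈ E, ⟪k, h⟫ ≤ ⟪x, h⟫ - ε := by
  set L := (fun y => -x + y) ⁻¹' (ℝ ∙ u : Set V)
  have hL : ∀ γ : ℝ, x + γ • u ∈ L := fun γ =>
    Submodule.mem_span_singleton.2 ⟨γ, by simp⟩
  have hcpt : IsCompact (closedConvexHull ℝ E) :=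
    isCompact_of_isClosed_isBounded isClosed_closedConvexHull <| by
      rw [closedConvexHull_eq_closure_convexHull]; exact (isBounded_convexHull.2 hEb).closure
  have hdisj : Disjoint (closedConvexHull ℝ E) L := by
    refine disjoint_left.2 fun y hy hyL => ?_
    obtain ⟨γ, hγ⟩ := Submodule.mem_span_singleton.1 hyL
    exact hx γ (by rwa [hγ, add_neg_cancel_left])
  obtain ⟨f, a, b, hfa, hab, hfb⟩ := geometric_hahn_banach_compact_closed convex_closedConvexHull
    hcpt ((Submodule.convex _).translate_preimage_right _)
    ((Submodule.closed_of_finiteDimensional _).preimage (by fun_prop)) hdisj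
  -- `f` is bounded below on the line `x + ℝ u`, hence constant on it
  have hfu : f u = 0 := by
    by_contra hfu
    have := hfb _ (hL ((b - f x) / f u))
    rw [map_add, map_smul, smul_eq_mul, div_mul_cancel₀ _ hfu] at this
    linarith
  set h₀ := (InnerProductSpace.toDual ℝ V).symm f
  have hh₀ : ∀ y, ⟪y, h₀⟫ = f y := fun y => by
    rw [real_inner_comm]; exact InnerProductSpace.toDual_symm_apply
  obtain ⟨k₀, hk₀⟩ := hEne
  have hfk₀ := hfa k₀ (subset_closedConvexHull hk₀)
  have hfx := hfb x (by simp)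
  have hne : h₀ ≠ 0 := fun h0 => by simp [← hh₀, h0] at hfk₀ hfx; linarith
  have hpos : 0 < ‖h₀‖ := norm_pos_iff.2 hne
  refine ⟨‖h₀‖⁻¹ • h₀, by simp [norm_smul, hpos.ne'], ?_, (b - a) / ‖h₀‖,
    div_pos (sub_pos.2 hab) hpos, fun k hk => ?_⟩
  · rw [real_inner_smul_right, hh₀, hfu, mul_zero]
  · have := hfa k (subset_closedConvexHull hk)
    rw [real_inner_smul_right, real_inner_smul_right, hh₀, hh₀, ← div_eq_inv_mul,
      ← div_eq_inv_mul, ← sub_div]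
    gcongr
    linarith

noncomputable def supportFunction (K : Set V) (w : V) : ℝ := sSup ((⟪·, w⟫) '' K)

variable {K : Set V}

lemma IsCompact.inner_le_supportFunction (hK : IsCompact K) {k : V} (hk : k ∈ K) (w : V) :
    ⟪k, w⟫ ≤ supportFunction K w :=
  le_csSup (hK.bddAbove_image (by fun_prop : Continuous (⟪·, w⟫)).continuousOn) ⟨k, hk, rfl⟩

lemma supportFunction_le (hK : K.Nonempty) {w : V} {a : ℝ} (h : ∀ k ∈ K, ⟪k, w⟫ ≤ a) :
    supportFunction K w ≤ a :=
  csSup_le (hK.image _) (forall_mem_image.2 h)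

lemma IsCompact.exists_supportFunction_eq_inner (hK : IsCompact K) (hne : K.Nonempty) (w : V) :
    ∃ k ∈ K, supportFunction K w = ⟪k, w⟫ := by
  obtain ⟨k, hk, hmax⟩ := hK.exists_isMaxOn hne (by fun_prop : Continuous (⟪·, w⟫)).continuousOn
  exact ⟨k, hk, le_antisymm (supportFunction_le hne hmax) (hK.inner_le_supportFunction hk w)⟩

lemma IsCompact.lipschitzWith_supportFunction (hK : IsCompact K) (hne : K.Nonempty)
    (hKb : K ⊆ closedBall 0 1) : LipschitzWith 1 (supportFunction K) := by
  refine LipschitzWith.of_le_add fun w w' => ?_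
  obtain ⟨k, hk, hkw⟩ := hK.exists_supportFunction_eq_inner hne w
  calc supportFunction K w = ⟪k, w'⟫ + ⟪k, w - w'⟫ := by rw [hkw, inner_sub_right]; ring
    _ ≤ supportFunction K w' + ‖k‖ * ‖w - w'‖ :=
      add_le_add (hK.inner_le_supportFunction hk w') (real_inner_le_norm _ _)
    _ ≤ supportFunction K w' + dist w w' := by
      rw [dist_eq_norm]
      gcongr
      exact mul_le_of_le_one_left (norm_nonneg _) (mem_closedBall_zero_iff.1 (hKb hk))

lemma IsCompact.supportFunction_lt_one (hK : IsCompact K) (hne : K.Nonempty) (hKs : K ⊆ sphere 0 1)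
    {w : V} (hw : ‖w‖ = 1) (hwK : w ∉ K) : supportFunction K w < 1 := by
  obtain ⟨k, hk, hkw⟩ := hK.exists_supportFunction_eq_inner hne w
  rw [hkw, inner_lt_one_iff_real_of_norm_eq_one (mem_sphere_zero_iff_norm.1 (hKs hk)) hw]
  exact ne_of_mem_of_not_mem hk hwK

lemma IsCompact.neg_one_lt_supportFunction (hK : IsCompact K) (hKs : K ⊆ sphere 0 1)
    (hKnt : K.Nontrivial) {w : V} (hw : ‖w‖ = 1) : -1 < supportFunction K w := by
  obtain ⟨k, hk, hkw⟩ := hKnt.exists_ne (-w)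
  have hk1 : ‖k‖ = 1 := mem_sphere_zero_iff_norm.1 (hKs hk)
  have : ⟪k, w⟫ ≠ -1 := (inner_eq_neg_one_iff_of_norm_eq_one hk1 hw).not.2 hkw
  exact (lt_of_le_of_ne (neg_one_le_real_inner_of_norm_eq_one hk1 hw) this.symm).trans_le
    (hK.inner_le_supportFunction hk w)

lemma supportFunction_smul_add_smul_le (hne : K.Nonempty) (hKb : K ⊆ closedBall 0 1) {u h : V}
    (hh : ‖h‖ ≤ 1) {a b t q η : ℝ} (ha : 0 ≤ a) (hb : 0 ≤ b) (hab : b * (1 - q) ≤ a * η)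
    (ht : ∀ k ∈ K, ⟪k, u⟫ ≤ t) (hnear : ∀ k ∈ K, t - η < ⟪k, u⟫ → ⟪k, h⟫ ≤ q) :
    supportFunction K (a • u + b • h) ≤ a * t + b * q := by
  refine supportFunction_le hne fun k hk => ?_
  rw [inner_add_right, real_inner_smul_right, real_inner_smul_right]
  by_cases hkt : t - η < ⟪k, u⟫
  · exact add_le_add (mul_le_mul_of_nonneg_left (ht k hk) ha)
      (mul_le_mul_of_nonneg_left (hnear k hk hkt) hb)
  · have hkh : ⟪k, h⟫ ≤ 1 := (real_inner_le_norm k h).trans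
      (mul_le_one₀ (mem_closedBall_zero_iff.1 (hKb hk)) (norm_nonneg _) hh)
    nlinarith [mul_le_mul_of_nonneg_left (not_lt.1 hkt) ha, mul_le_mul_of_nonneg_left hkh hb]

lemma nontrivial_of_smul_add_smul_mem_closedConvexHull {E : Set V} (hEs : E ⊆ sphere 0 1)
    {p u : V} {t β γ : ℝ} (hp : ‖p‖ = 1) (hu : ‖u‖ = 1) (htm : t < ⟪p, u⟫) (hβ : 0 < β)
    (hβγ : β + γ * t = 1) (hEu : ∀ k ∈ E, ⟪k, u⟫ = t)
    (hc : β • p + γ • u ∈ closedConvexHull ℝ E) : E.Nontrivial := by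
  by_contra hE
  have hsub := not_nontrivial_iff.1 hE
  have hcE := closedConvexHull_min subset_rfl hsub.convex hsub.isClosed hc
  have hcu : β * ⟪p, u⟫ + γ = t := by
    simpa [inner_add_left, real_inner_smul_left, real_inner_self_eq_norm_sq, hu] using hEu _ hcE
  have hc1 : ‖β • p + γ • u‖ ^ 2 = 1 := by rw [mem_sphere_zero_iff_norm.1 (hEs hcE), one_pow]
  rw [norm_add_sq_real, norm_smul, norm_smul, real_inner_smul_left, real_inner_smul_right, hp, hu,
    Real.norm_eq_abs, Real.norm_eq_abs, mul_one, mul_one, sq_abs, sq_abs] at hc1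
  -- `‖β • p + γ • u‖² = 1 + β γ (⟪p, u⟫ - t)`
  have hγ : β * (γ * (⟪p, u⟫ - t)) = 0 := by
    linear_combination hc1 - γ * hcu - (1 + β) * hβγ
  rcases mul_eq_zero.1 ((mul_eq_zero.1 hγ).resolve_left hβ.ne') with rfl | hpt
  · have hβ1 : β = 1 := by linear_combination hβγ
    rw [hβ1] at hcu
    linarith
  · linarith

lemma IsCompact.exists_capDepth_lt (hK : IsCompact K) (hKs : K ⊆ sphere 0 1)
    (hKnt : K.Nontrivial) {p u h : V} (hp : ‖p‖ = 1) (hu : ‖u‖ = 1) (hh : ‖h‖ = 1)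
    (huh : ⟪u, h⟫ = 0) (ht : supportFunction K u ∈ Ioo (-1) 1)
    (htm : supportFunction K u < ⟪p, u⟫) {q : ℝ}
    (hq : ∀ k ∈ K, ⟪k, u⟫ = supportFunction K u → ⟪k, h⟫ < q)
    (hd : 0 < (⟪p, h⟫ - q) * (1 - supportFunction K u ^ 2) +
      (⟪p, u⟫ - supportFunction K u) * (supportFunction K u * q)) :
    ∃ w : V, ‖w‖ = 1 ∧
      capDepth ⟪p, u⟫ (supportFunction K u) < capDepth ⟪p, w⟫ (supportFunction K w) := by
  set t := supportFunction K u
  obtain ⟨η, hη, hnear⟩ := hK.exists_pos_forall_near_lt (f := (⟪·, u⟫)) (g := (⟪·, h⟫))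
    (by fun_prop) (by fun_prop) (fun k hk => hK.inner_le_supportFunction hk u) hq
  -- rotating `u` towards `h` deepens `p` into the cap to first order, while by the choice of `η`
  -- the support function stays below the rotated height `cos θ * t + sin θ * q`
  obtain ⟨θ, hdepth, hcos, hsin, hθη, hτ⟩ :=
    ((eventually_capDepth_lt_capDepth_rotate ht hd).and
      (eventually_nhdsGT_zero_cos_sin ht.2 hη)).exists
  set w := Real.cos θ • u + Real.sin θ • h
  have hw : ‖w‖ = 1 := norm_cos_smul_add_sin_smul hu hh huh θ
  have hpw : ⟪p, w⟫ = Real.cos θ * ⟪p, u⟫ + Real.sin θ * ⟪p, h⟫ := by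
    rw [inner_add_right, real_inner_smul_right, real_inner_smul_right]
  rw [← hpw] at hdepth
  have hgw : supportFunction K w ≤ Real.cos θ * t + Real.sin θ * q :=
    supportFunction_smul_add_smul_le hKnt.nonempty (hKs.trans sphere_subset_closedBall) hh.le
      hcos.le hsin.le hθη (fun k hk => hK.inner_le_supportFunction hk u)
      fun k hk hkt => (hnear k hk hkt).le
  have hτp : Real.cos θ * t + Real.sin θ * q < ⟪p, w⟫ := lt_of_not_ge fun h =>
    (capDepth_nonpos h).not_gt ((capDepth_pos ht htm).trans hdepth)
  refine ⟨w, hw, hdepth.trans_le ?_⟩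
  exact capDepth_le_capDepth (hK.neg_one_lt_supportFunction hKs hKnt hw) hτ hgw hτp.le
    (by simpa [hp, hw] using real_inner_le_norm p w)

variable [FiniteDimensional ℝ V]

lemma IsCompact.exists_forall_capDepth_le (hK : IsCompact K) (hKs : K ⊆ sphere 0 1)
    (hKnt : K.Nontrivial) {p : V} (hp : ‖p‖ = 1) (hpK : p ∉ K) :
    ∃ u : V, ‖u‖ = 1 ∧ supportFunction K u ∈ Ioo (-1) 1 ∧ supportFunction K u < ⟪p, u⟫ ∧
      ∀ w : V, ‖w‖ = 1 →
        capDepth ⟪p, w⟫ (supportFunction K w) ≤ capDepth ⟪p, u⟫ (supportFunction K u) := by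
  set g := supportFunction K
  have hg : Continuous g :=
    (hK.lipschitzWith_supportFunction hKnt.nonempty (hKs.trans sphere_subset_closedBall)).continuous
  have hgp : g p < 1 := hK.supportFunction_lt_one hKnt.nonempty hKs hp hpK
  set C := sphere (0 : V) 1 ∩ {w | g w ≤ ⟪p, w⟫}
  have hgC : ∀ w ∈ C, g w ∈ Ioo (-1) 1 := by
    rintro w ⟨hw, hgw⟩
    rw [mem_sphere_zero_iff_norm] at hw
    refine ⟨hK.neg_one_lt_supportFunction hKs hKnt hw, ?_⟩
    by_cases hpw : p = w
    · exact hpw ▸ hgp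
    · exact hgw.trans_lt ((inner_lt_one_iff_real_of_norm_eq_one hp hw).2 hpw)
  have hpp : ⟪p, p⟫ = 1 := by rw [real_inner_self_eq_norm_sq, hp, one_pow]
  have hpC : p ∈ C := ⟨mem_sphere_zero_iff_norm.2 hp, (hgp.trans_eq hpp.symm).le⟩
  have hcont : ContinuousOn (fun w => capDepth ⟪p, w⟫ (g w)) C :=
    ((by fun_prop : Continuous fun w => ⟪p, w⟫ - g w).continuousOn).div (by fun_prop)
      fun w hw => (Real.sqrt_pos.2 (one_sub_sq_pos_of_mem_Ioo (hgC w hw))).ne'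
  obtain ⟨u, ⟨hu, hgu⟩, hmax⟩ :=
    ((isCompact_sphere 0 1).inter_right (isClosed_le hg (by fun_prop))).exists_isMaxOn
      ⟨p, hpC⟩ hcont
  have hpos : 0 < capDepth ⟪p, u⟫ (g u) :=
    (capDepth_pos (hgC p hpC) (hgp.trans_eq hpp.symm)).trans_le (hmax hpC)
  refine ⟨u, mem_sphere_zero_iff_norm.1 hu, hgC u ⟨hu, hgu⟩,
    lt_of_not_ge fun h => (capDepth_nonpos h).not_gt hpos, fun w hw => ?_⟩
  by_cases hgw : g w ≤ ⟪p, w⟫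
  · exact hmax ⟨mem_sphere_zero_iff_norm.2 hw, hgw⟩
  · exact (capDepth_nonpos (not_le.1 hgw).le).trans hpos.le

lemma IsCompact.exists_smul_add_smul_mem_closedConvexHull (hK : IsCompact K)
    (hKs : K ⊆ sphere 0 1) (hKnt : K.Nontrivial) {p u : V} (hp : ‖p‖ = 1) (hu : ‖u‖ = 1)
    (ht : supportFunction K u ∈ Ioo (-1) 1) (htm : supportFunction K u < ⟪p, u⟫)
    (hmax : ∀ w : V, ‖w‖ = 1 →
      capDepth ⟪p, w⟫ (supportFunction K w) ≤ capDepth ⟪p, u⟫ (supportFunction K u)) :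
    ∃ β > 0, ∃ γ : ℝ, β + γ * supportFunction K u = 1 ∧
      β • p + γ • u ∈ closedConvexHull ℝ {k ∈ K | ⟪k, u⟫ = supportFunction K u} := by
  set t := supportFunction K u
  set m := ⟪p, u⟫
  set E := {k ∈ K | ⟪k, u⟫ = t}
  have hm : m ≤ 1 := by simpa [hp, hu] using real_inner_le_norm p u
  have htm' : 0 < 1 - t * m := by nlinarith [ht.1, ht.2]
  -- `β` is forced by `β + γ t = 1` together with `⟪β p + γ u, u⟫ = t`
  set β := (1 - t ^ 2) / (1 - t * m)
  have hβ : β * (1 - t * m) = 1 - t ^ 2 := div_mul_cancel₀ _ htm'.ne'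
  refine ⟨β, div_pos (one_sub_sq_pos_of_mem_Ioo ht) htm', t - β * m,
    by linear_combination hβ, ?_⟩
  by_contra hnot
  have hline : ∀ γ : ℝ, β • p + γ • u ∉ closedConvexHull ℝ E := fun γ hγ => hnot <| by
    have := inner_eq_of_mem_closedConvexHull (fun k hk => hk.2) hγ
    rw [inner_add_left, real_inner_smul_left, real_inner_smul_left, real_inner_self_eq_norm_sq,
      hu] at this
    convert hγ using 3
    linarith
  obtain ⟨k₀, hk₀, hk₀u⟩ := hK.exists_supportFunction_eq_inner hKnt.nonempty u
  have hEb : Bornology.IsBounded E :=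
    isBounded_closedBall.subset ((sep_subset _ _).trans (hKs.trans sphere_subset_closedBall))
  obtain ⟨h, hh, huh, ε, hε, hsep⟩ :=
    exists_orthogonal_separating hEb ⟨k₀, hk₀, hk₀u.symm⟩ hline
  have hq : ∀ k ∈ K, ⟪k, u⟫ = t → ⟪k, h⟫ < β * ⟪p, h⟫ - ε / 2 := fun k hk hkt => by
    have := hsep k ⟨hk, hkt⟩
    rw [real_inner_smul_left] at this
    linarith
  have hgain : (⟪p, h⟫ - (β * ⟪p, h⟫ - ε / 2)) * (1 - t ^ 2) +
      (m - t) * (t * (β * ⟪p, h⟫ - ε / 2)) = (1 - t * m) * (ε / 2) := by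
    linear_combination (-⟪p, h⟫) * hβ
  obtain ⟨w, hw, hlt⟩ := hK.exists_capDepth_lt hKs hKnt hp hu hh huh ht htm hq
    (by rw [hgain]; positivity)
  exact (hmax w hw).not_gt hlt

end InnerProductSpace

lemma mem_hypHull_of_smul_add_smul_mem {u p : EuclideanSpace ℝ (Fin 3)} {t β γ : ℝ}
    {A : Set (EuclideanSpace ℝ (Fin 3))} (hp : p ∈ cap u t) (hβ : 0 < β) (hβγ : β + γ * t = 1)
    (hc : β • p + γ • u ∈ closedConvexHull ℝ A) : p ∈ hypHull u t A := by
  refine ⟨hp, ?_⟩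
  rintro _ ⟨v, -, s, -, huv, hAv, rfl⟩
  refine ⟨hp.1, ?_⟩
  have hcv := le_inner_of_mem_closedConvexHull (fun x hx => (hAv hx).2) hc
  rw [inner_add_left, real_inner_smul_left, real_inner_smul_left, huv] at hcv
  have : β * s = s - γ * (t * s) := by linear_combination s * hβγ
  exact le_of_mul_le_mul_left (by linarith) hβ

theorem kulkarni_pinkall_lemma_general
    (K : Set (EuclideanSpace ℝ (Fin 3))) (hKs : K ⊆ Sph) (hKc : IsCompact K)
    (hKnt : K.Nontrivial)
    (p : EuclideanSpace ℝ (Fin 3)) (hp : p ∈ Sph \ K) :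
    ∃ (u : EuclideanSpace ℝ (Fin 3)) (t : ℝ),
      IsKPBall K u t ∧ p ∈ hypHull u t (cap u t ∩ K) := by
  have hpS : ‖p‖ = 1 := mem_sphere_zero_iff_norm.1 hp.1
  obtain ⟨u, hu, ht, htm, hmax⟩ := hKc.exists_forall_capDepth_le hKs hKnt hpS hp.2
  obtain ⟨β, hβ, γ, hβγ, hc⟩ :=
    hKc.exists_smul_add_smul_mem_closedConvexHull hKs hKnt hpS hu ht htm hmax
  set t := supportFunction K u
  have hE : {k ∈ K | ⟪k, u⟫ = t} ⊆ capBd u t ∩ K := fun k hk => ⟨⟨hKs hk.1, hk.2⟩, hk.1⟩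
  refine ⟨u, t, ⟨mem_sphere_zero_iff_norm.2 hu, ht, ?_, ?_⟩, ?_⟩
  · exact eq_empty_iff_forall_notMem.2 fun x ⟨⟨_, hx⟩, hxK⟩ =>
      (hKc.inner_le_supportFunction hxK u).not_gt hx
  · exact (nontrivial_of_smul_add_smul_mem_closedConvexHull (fun k hk => hKs hk.1) hpS hu htm hβ
      hβγ (fun k hk => hk.2) hc).mono hE
  · have hEA : {k ∈ K | ⟪k, u⟫ = t} ⊆ cap u t ∩ K := fun k hk => ⟨⟨hKs hk.1, hk.2.ge⟩, hk.1⟩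
    exact mem_hypHull_of_smul_add_smul_mem ⟨hp.1, htm.le⟩ hβ hβγ
      ((closedConvexHull ℝ).monotone hEA hc)

/-- Kulkarni–Pinkall inversion lemma: if `K` is a nondegenerate compact subset of the
sphere with connected complement `U∞`, then every point `p ∈ U∞` lies in the hyperbolic
convex hull of `B ∩ K` for some round ball `B` with interior contained in `U∞` and
`|∂B ∩ K| ≥ 2`. -/
theorem kulkarni_pinkall_lemma
    (K : Set (EuclideanSpace ℝ (Fin 3))) (hKs : K ⊆ Sph) (hKc : IsCompact K)
    (hKnt : K.Nontrivial) (hU : IsConnected (Sph \ K))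
    (p : EuclideanSpace ℝ (Fin 3)) (hp : p ∈ Sph \ K) :
    ∃ (u : EuclideanSpace ℝ (Fin 3)) (t : ℝ),
      IsKPBall K u t ∧ p ∈ hypHull u t (cap u t ∩ K) :=
  kulkarni_pinkall_lemma_general K hKs hKc hKnt p hp
end
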